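/- Let R be a commutative noetherian ring and Φ a non-degenerate sp-filtration of Spec R. Then Φ is a codimension filtration (i.e., f_Φ is a codimension function) if and only if Φ satisfies the strong Cousin condition. -/

import Mathlib

/-- A subset of `Spec R` is specialization closed if it is an upper set with respect to
inclusion of primes. An *sp-filtration* of `Spec R` is a decreasing family of
specialization closed subsets indexed by `ℤ`. -/
def IsSpFiltration {R : Type*} [CommRing R] (Φ : ℤ → Set (PrimeSpectrum R)) : Prop :=
  (∀ n : ℤ, ∀ p ∈ Φ n, ∀ q : PrimeSpectrum R, p ≤ q → q ∈ Φ n) ∧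
    ∀ n : ℤ, Φ (n + 1) ⊆ Φ n

/-- An sp-filtration is non-degenerate if the union of its members is all of `Spec R`
and their intersection is empty. -/
def IsNondegenerate {R : Type*} [CommRing R] (Φ : ℤ → Set (PrimeSpectrum R)) : Prop :=
  (⋃ n : ℤ, Φ n) = Set.univ ∧ (⋂ n : ℤ, Φ n) = ∅

/-- A codimension function on `Spec R` is a function `d : Spec R → ℤ` such that
`d(q) = d(p) + 1` whenever `q` covers `p` in the inclusion order (a saturated chain
`p ⊊ q` of length 1). -/
def IsCodimFunction {R : Type*} [CommRing R] (d : PrimeSpectrum R → ℤ) : Prop :=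
  ∀ p q : PrimeSpectrum R, p ⋖ q → d q = d p + 1

/-- An sp-filtration `Φ` satisfies the strong Cousin condition if for every `n ∈ ℤ` and
every saturated chain `p ⊊ q` of primes, `q ∈ Φ(n)` if and only if `p ∈ Φ(n − 1)`. -/
def SatisfiesStrongCousin {R : Type*} [CommRing R] (Φ : ℤ → Set (PrimeSpectrum R)) : Prop :=
  ∀ n : ℤ, ∀ p q : PrimeSpectrum R, p ⋖ q → (q ∈ Φ n ↔ p ∈ Φ (n - 1))

/-!
Every non-degenerate decreasing `ℤ`-indexed filtration `Φ` is of the form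
`Φ n = {p | n < d p}`, with `d p` one more than the last index `n` such that `p ∈ Φ n`.
For such a filtration and a saturated chain `p ⋖ q`, the strong Cousin condition at
`n = d p` gives `d p < d q`, and at `n = d p + 1` gives `d q ≤ d p + 1`; conversely
`d q = d p + 1` makes both sides of the condition the same inequality.
-/

theorem exists_eq_setOf_lt_of_antitone {α : Type*} {Φ : ℤ → Set α} (hΦ : Antitone Φ)
    (hunion : ⋃ n, Φ n = Set.univ) (hinter : ⋂ n, Φ n = ∅) :
    ∃ d : α → ℤ, Φ = fun n => {p | n < d p} := by
  have hlast : ∀ p, ∃ N, p ∈ Φ N ∧ ∀ n, p ∈ Φ n → n ≤ N := by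
    intro p
    obtain ⟨k, hk⟩ := Set.mem_iUnion.1 (hunion ▸ Set.mem_univ p)
    obtain ⟨m, hm⟩ : ∃ m, p ∉ Φ m := by
      simpa using (hinter ▸ Set.notMem_empty p : p ∉ ⋂ n, Φ n)
    have hbdd : ∀ n, p ∈ Φ n → n ≤ m := fun n hn => le_of_not_ge fun hmn => hm (hΦ hmn hn)
    exact Int.exists_greatest_of_bdd ⟨m, hbdd⟩ ⟨k, hk⟩
  choose N hN hmax using hlast
  refine ⟨fun p => N p + 1, funext fun n => Set.ext fun p => ?_⟩
  simp only [Set.mem_ofPred_eq, Int.lt_add_one_iff]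
  exact ⟨hmax p n, fun hn => hΦ hn (hN p)⟩

theorem satisfiesStrongCousin_setOf_lt_iff {R : Type*} [CommRing R]
    (d : PrimeSpectrum R → ℤ) :
    SatisfiesStrongCousin (fun n => {p | n < d p}) ↔ IsCodimFunction d := by
  refine ⟨fun hc p q hpq => ?_, fun hd n p q hpq => ?_⟩
  · have hlt : d p < d q := (hc (d p) p q hpq).2 (sub_one_lt (d p))
    have hle : d q ≤ d p + 1 := by
      by_contra h
      simpa using (hc (d p + 1) p q hpq).1 (not_le.1 h)
    omega
  · simp only [Set.mem_ofPred_eq, hd p q hpq]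
    omega

theorem stmt_4_general (R : Type*) [CommRing R]
    (Φ : ℤ → Set (PrimeSpectrum R)) (hΦ : IsSpFiltration Φ) (hnd : IsNondegenerate Φ) :
    (∃ d : PrimeSpectrum R → ℤ, IsCodimFunction d ∧
        ∀ n : ℤ, Φ n = {p : PrimeSpectrum R | n < d p}) ↔
      SatisfiesStrongCousin Φ := by
  refine ⟨fun ⟨d, hd, hΦd⟩ => ?_, fun hc => ?_⟩
  · rw [funext hΦd]
    exact (satisfiesStrongCousin_setOf_lt_iff d).2 hd
  · obtain ⟨d, rfl⟩ := exists_eq_setOf_lt_of_antitone (antitone_int_of_succ_le hΦ.2) hnd.1 hnd.2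
    exact ⟨d, (satisfiesStrongCousin_setOf_lt_iff d).1 hc, fun _ => rfl⟩

/-- A non-degenerate sp-filtration of the spectrum of a commutative noetherian ring is a
codimension filtration (i.e. of the form `Φ_d(n) = {p | d(p) > n}` for a codimension
function `d`, equivalently `f_Φ` is a codimension function) if and only if it satisfies
the strong Cousin condition. -/
theorem stmt_4 (R : Type*) [CommRing R] [IsNoetherianRing R]
    (Φ : ℤ → Set (PrimeSpectrum R)) (hΦ : IsSpFiltration Φ) (hnd : IsNondegenerate Φ) :
    (∃ d : PrimeSpectrum R → ℤ, IsCodimFunction d ∧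
        ∀ n : ℤ, Φ n = {p : PrimeSpectrum R | n < d p}) ↔
      SatisfiesStrongCousin Φ :=
  stmt_4_general R Φ hΦ hnd
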